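/- arXiv:2502.14733 — 4 statements merged into one kernel-verified Lean document; each statement's English description precedes it below -/
import Mathlib

section
/- If C ⊆ ℝ² is a compact orthogonally connected set and K ⊆ int C is a convex body (compact convex set with nonempty interior), then C \ int K is orthogonally connected. -/
open Set MeasureTheory Bornology
open scoped ENNReal

noncomputable section

/-- `ℝ^d` as Euclidean space. -/
abbrev EucR (d : ℕ) := EuclideanSpace ℝ (Fin d)

/-- The segment from `x` to `y` is parallel to a coordinate axis
(all coordinates except possibly one agree). -/
def IsOrthSeg {d : ℕ} (x y : EucR d) : Prop :=
  ∃ i : Fin d, ∀ j, j ≠ i → x j = y j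

/-- `p 0, p 1, …, p n` is an orthogonal polygonal path contained in `S`. -/
def IsOrthPathIn {d : ℕ} (S : Set (EucR d)) (p : ℕ → EucR d) (n : ℕ) : Prop :=
  ∀ k, k < n → IsOrthSeg (p k) (p (k + 1)) ∧ segment ℝ (p k) (p (k + 1)) ⊆ S

/-- `S` is orthogonally connected. -/
def OrthConnected {d : ℕ} (S : Set (EucR d)) : Prop :=
  ∀ x ∈ S, ∀ y ∈ S, ∃ n : ℕ, ∃ p : ℕ → EucR d,
    p 0 = x ∧ p n = y ∧ IsOrthPathIn S p n

/-- An orthogonal path is a staircase if all edges parallel to the same axis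
point in the same direction. -/
def IsStaircaseIn {d : ℕ} (S : Set (EucR d)) (p : ℕ → EucR d) (n : ℕ) : Prop :=
  IsOrthPathIn S p n ∧
    ∀ k, k < n → ∀ l, l < n → ∀ i : Fin d,
      (∀ j, j ≠ i → p k j = p (k + 1) j) → (∀ j, j ≠ i → p l j = p (l + 1) j) →
        0 ≤ (p (k + 1) i - p k i) * (p (l + 1) i - p l i)

/-- `S` is staircase connected. -/
def StaircaseConnected {d : ℕ} (S : Set (EucR d)) : Prop :=
  ∀ x ∈ S, ∀ y ∈ S, ∃ n : ℕ, ∃ p : ℕ → EucR d,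
    p 0 = x ∧ p n = y ∧ IsStaircaseIn S p n

/-- `S` is orthogonally convex. -/
def OrthConvex {d : ℕ} (S : Set (EucR d)) : Prop :=
  ∀ x ∈ S, ∀ y ∈ S, IsOrthSeg x y → segment ℝ x y ⊆ S

/-- A convex body: compact convex with nonempty interior. -/
def IsConvexBody {d : ℕ} (K : Set (EucR d)) : Prop :=
  Convex ℝ K ∧ IsCompact K ∧ (interior K).Nonempty

/-- The point of `ℝ²` with coordinates `(a, b)`. -/
def pt2 (a b : ℝ) : EucR 2 := (WithLp.equiv 2 (Fin 2 → ℝ)).symm ![a, b]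

/-- Horizontal width of `S` at `x`: the length of the connected component
containing `x` of the intersection of `S` with the horizontal line through `x`. -/
def hw (S : Set (EucR 2)) (x : EucR 2) : ℝ≥0∞ :=
  volume (connectedComponentIn {t : ℝ | pt2 t (x 1) ∈ S} (x 0))

/-- Vertical width of `S` at `x`. -/
def vw (S : Set (EucR 2)) (x : EucR 2) : ℝ≥0∞ :=
  volume (connectedComponentIn {t : ℝ | pt2 (x 0) t ∈ S} (x 1))

/-- The set of unit directions from `x` towards points of `K`. -/
def dirSet (x : EucR 2) (K : Set (EucR 2)) : Set (EucR 2) :=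
  {u | ∃ y ∈ K, y ≠ x ∧ u = ‖y - x‖⁻¹ • (y - x)}

/-- `α_x(K)`: the angular (1-dimensional Hausdorff) measure of the set of unit
directions from `x` towards other points of `K`. -/
def angMeasure (x : EucR 2) (K : Set (EucR 2)) : ℝ≥0∞ :=
  μH[1] (dirSet x K)

/-- The half-line from `x` through `y`. -/
def rayFrom (x y : EucR 2) : Set (EucR 2) := {z | ∃ t : ℝ, 0 ≤ t ∧ z = x + t • (y - x)}

/-- `T_x(K)`: the union of the half-lines from `x` through the points of `K \ {x}`. -/
def TCone (x : EucR 2) (K : Set (EucR 2)) : Set (EucR 2) := ⋃ y ∈ K \ {x}, rayFrom x y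

/-- `K` is obtuse: at every boundary point `x`, either `α_x(K) > π/2`, or
`α_x(K) = π/2` and `T_x(K) \ {x}` is not open. -/
def Obtuse (K : Set (EucR 2)) : Prop :=
  ∀ x ∈ frontier K,
    ENNReal.ofReal (Real.pi / 2) < angMeasure x K ∨
      (angMeasure x K = ENNReal.ofReal (Real.pi / 2) ∧ ¬ IsOpen (TCone x K \ {x}))

/-- Inclusion of `ℝ² × ℝ` into `ℝ³`. -/
def incl3 (q : EucR 2) (t : ℝ) : EucR 3 := (WithLp.equiv 2 (Fin 3 → ℝ)).symm ![q 0, q 1, t]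

/-- A piece of a continuum `C`: the closure of a connected component of
`C \ {x}` for some cut point `x` of `C`. -/
def IsPiece (C P : Set (EucR 2)) : Prop :=
  ∃ x ∈ C, ¬ IsPreconnected (C \ {x}) ∧
    ∃ y ∈ C \ {x}, P = closure (connectedComponentIn (C \ {x}) y)

/-- `f` is unimodal on `[a,b]`: non-decreasing on `[a,c]`, non-increasing on `[c,b]`
for some `c ∈ (a,b)`. -/
def Unimodal (f : ℝ → ℝ) (a b : ℝ) : Prop :=
  ∃ c ∈ Ioo a b, MonotoneOn f (Icc a c) ∧ AntitoneOn f (Icc c b)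

/-- `a` is an s-extreme point of `M`: it belongs to a staircase in `M` only as an
endpoint. -/
def SExtreme (M : Set (EucR 2)) (a : EucR 2) : Prop :=
  a ∈ M ∧ ∀ n : ℕ, ∀ γ : ℕ → EucR 2, IsStaircaseIn M γ n →
    a ∈ ⋃ k ∈ Set.Iio n, segment ℝ (γ k) (γ (k + 1)) → a = γ 0 ∨ a = γ n

/-- `M ⊆ ℝ²` is a strip: the preimage of an interval of `ℝ` under a nonzero
linear functional (this includes half-planes and the whole plane). -/
def IsStrip (M : Set (EucR 2)) : Prop :=
  ∃ f : EucR 2 →ₗ[ℝ] ℝ, f ≠ 0 ∧ ∃ I : Set ℝ, I.OrdConnected ∧ M = f ⁻¹' I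

end

/-! Fix `ε > 0` with the closed `ε`-neighbourhood of `K` inside `int C`. Describe `K` by its
horizontal slices `[a y, b y]` for `y ∈ [c, d]` (`leftEnd`, `rightEnd`, `minHeight`, `maxHeight`):
every boundary point lies on the left rail `x = a y`, on the right rail `x = b y`, or on the flat
bottom or top of `K`. One climbs along the left rail by a staircase: on a strip of height at most
`ε / 2`, go left to the infimum of `a` on the strip, up, and back right. The staircase stays
weakly left of `a`, hence outside `int K`, and the chord between two rail points shows that it
stays within `ε` of `K`. The right rail is the left rail of `-K`. So any two boundary points of
`K` are joined by an orthogonal path in `C \ int K`, and an orthogonal path in `C` is repaired by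
cutting each edge that meets `int K` at the boundary points of `K` nearest to its endpoints and
inserting such a detour. -/

open Relation Metric
open scoped Pointwise

section OrthPaths

variable {d : ℕ} {S T : Set (EucR d)} {x y z : EucR d}

def IsOrthSegIn (S : Set (EucR d)) (x y : EucR d) : Prop :=
  IsOrthSeg x y ∧ segment ℝ x y ⊆ S

lemma IsOrthSeg.symm (h : IsOrthSeg x y) : IsOrthSeg y x :=
  let ⟨i, hi⟩ := h; ⟨i, fun j hj => (hi j hj).symm⟩

lemma IsOrthSeg.of_mem_segment (h : IsOrthSeg x y) (hz : z ∈ segment ℝ x y) : IsOrthSeg x z := by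
  obtain ⟨i, hi⟩ := h
  refine ⟨i, fun j hj => ?_⟩
  have hconv : Convex ℝ {w : EucR d | w j = x j} :=
    convex_hyperplane (EuclideanSpace.proj j : EucR d →L[ℝ] ℝ).toLinearMap.isLinear _
  exact (hconv.segment_subset rfl (hi j hj).symm hz).symm

lemma IsOrthSegIn.symm (h : IsOrthSegIn S x y) : IsOrthSegIn S y x :=
  ⟨h.1.symm, segment_symm ℝ y x ▸ h.2⟩

lemma IsOrthSegIn.mono (h : IsOrthSegIn S x y) (hST : S ⊆ T) : IsOrthSegIn T x y :=
  ⟨h.1, h.2.trans hST⟩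

instance : Std.Symm (IsOrthSegIn S) := ⟨fun _ _ h => h.symm⟩

lemma IsOrthSegIn.neg (h : IsOrthSegIn S x y) : IsOrthSegIn (-S) (-x) (-y) := by
  obtain ⟨⟨i, hi⟩, hS⟩ := h
  refine ⟨⟨i, fun j hj => by simp [hi j hj]⟩, ?_⟩
  rintro _ ⟨a, b, ha, hb, hab, rfl⟩
  exact hS ⟨a, b, ha, hb, hab, by simp [smul_neg]; abel⟩

lemma reflTransGen_isOrthSegIn_mono (hST : S ⊆ T)
    (h : ReflTransGen (IsOrthSegIn S) x y) : ReflTransGen (IsOrthSegIn T) x y :=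
  ReflTransGen.mono (fun _ _ h => h.mono hST) _ _ h

lemma reflTransGen_of_isOrthPathIn {p : ℕ → EucR d} {n : ℕ} (hp : IsOrthPathIn S p n) :
    ReflTransGen (IsOrthSegIn S) (p 0) (p n) := by
  suffices ∀ k ≤ n, ReflTransGen (IsOrthSegIn S) (p 0) (p k) from this n le_rfl
  intro k hk
  induction k with
  | zero => exact .refl
  | succ k ih => exact (ih (by omega)).tail (hp k (by omega))

lemma exists_isOrthPathIn_of_reflTransGen (h : ReflTransGen (IsOrthSegIn S) x y) :
    ∃ n p, p 0 = x ∧ p n = y ∧ IsOrthPathIn S p n := by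
  induction h with
  | refl => exact ⟨0, fun _ => x, rfl, rfl, fun k hk => absurd hk (Nat.not_lt_zero k)⟩
  | @tail b c _ hbc ih =>
    obtain ⟨n, p, hp0, hpn, hp⟩ := ih
    refine ⟨n + 1, fun k => if k ≤ n then p k else c, by simpa using hp0, by simp, ?_⟩
    intro k hk
    rcases Nat.lt_or_ge k n with hkn | hkn
    · simpa [hkn.le, Nat.succ_le_of_lt hkn] using hp k hkn
    · obtain rfl : k = n := by omega
      simpa [hpn, IsOrthSegIn] using hbc

lemma orthConnected_iff_reflTransGen :
    OrthConnected S ↔ ∀ x ∈ S, ∀ y ∈ S, ReflTransGen (IsOrthSegIn S) x y := by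
  refine forall₂_congr fun x _ => forall₂_congr fun y _ =>
    ⟨fun ⟨n, p, hp0, hpn, hp⟩ => ?_, exists_isOrthPathIn_of_reflTransGen⟩
  exact hp0 ▸ hpn ▸ reflTransGen_of_isOrthPathIn hp

end OrthPaths

section Entry
variable {E : Type*} [AddCommGroup E] [Module ℝ E] [TopologicalSpace E] [IsTopologicalAddGroup E]
  [ContinuousSMul ℝ E]

lemma IsClosed.exists_mem_frontier_segment_disjoint_interior {K : Set E} (hK : IsClosed K)
    {u w : E} (hu : u ∉ interior K) (hw : w ∈ K) :
    ∃ e ∈ segment ℝ u w, e ∈ frontier K ∧ Disjoint (segment ℝ u e) (interior K) := by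
  set φ : ℝ →ᵃ[ℝ] E := AffineMap.lineMap u w
  have hφ : Continuous φ := AffineMap.lineMap_continuous
  set T := Icc (0 : ℝ) 1 ∩ φ ⁻¹' K
  have hT : IsCompact T := isCompact_Icc.inter_right (hK.preimage hφ)
  have ht₀ : sInf T ∈ T :=
    hT.sInf_mem ⟨1, right_mem_Icc.2 zero_le_one, by simpa [φ] using hw⟩
  set t₀ := sInf T
  have hbefore : φ '' Ico 0 t₀ ⊆ Kᶜ := by
    rintro - ⟨t, ht, rfl⟩ htK
    exact ht.2.not_ge (csInf_le hT.bddBelow ⟨⟨ht.1, ht.2.le.trans ht₀.1.2⟩, htK⟩)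
  have hupto : φ '' Icc 0 t₀ ⊆ (interior K)ᶜ := by
    rw [← closure_compl]
    rcases eq_or_lt_of_le ht₀.1.1 with h0 | hpos
    · rw [← h0, Icc_self, image_singleton, singleton_subset_iff, closure_compl]
      simpa [φ] using hu
    · rw [← closure_Ico hpos.ne]
      exact (image_closure_subset_closure_image hφ).trans (closure_mono hbefore)
  have hseg : segment ℝ u (φ t₀) = φ '' Icc 0 t₀ := by
    rw [← segment_eq_Icc ht₀.1.1, image_segment]
    simp [φ]
  refine ⟨φ t₀, (segment_eq_image_lineMap ℝ u w).symm ▸ mem_image_of_mem φ ht₀.1, ?_, ?_⟩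
  · rw [hK.frontier_eq]
    exact ⟨ht₀.2, hupto (mem_image_of_mem φ ⟨ht₀.1.1, le_rfl⟩)⟩
  · rw [hseg]
    exact subset_compl_iff_disjoint_right.1 hupto

end Entry

section Detour

variable {d : ℕ} {C K : Set (EucR d)}

lemma IsOrthSegIn.exists_frontier_diff_interior (hK : IsClosed K) {u v w : EucR d}
    (huv : IsOrthSegIn C u v) (hu : u ∉ interior K) (hw : w ∈ segment ℝ u v) (hwK : w ∈ K) :
    ∃ e ∈ frontier K, IsOrthSegIn (C \ interior K) u e := by
  obtain ⟨e, he, hfr, hdisj⟩ := hK.exists_mem_frontier_segment_disjoint_interior hu hwK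
  have hsub {z} (hz : z ∈ segment ℝ u v) : segment ℝ u z ⊆ segment ℝ u v :=
    (convex_segment u v).segment_subset (left_mem_segment ℝ u v) hz
  have he' : e ∈ segment ℝ u v := hsub hw he
  exact ⟨e, hfr, huv.1.of_mem_segment he', subset_sdiff.2 ⟨(hsub he').trans huv.2, hdisj⟩⟩

lemma reflTransGen_diff_interior (hK : IsClosed K)
    (hfr : ∀ e ∈ frontier K, ∀ f ∈ frontier K, ReflTransGen (IsOrthSegIn (C \ interior K)) e f)
    {x y : EucR d} (hxy : ReflTransGen (IsOrthSegIn C) x y) (hx : x ∉ interior K)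
    (hy : y ∉ interior K) : ReflTransGen (IsOrthSegIn (C \ interior K)) x y := by
  set R := ReflTransGen (IsOrthSegIn (C \ interior K)) x
  -- a path that has entered `int K` has crossed the frontier, so the whole frontier is reachable
  suffices (y ∉ interior K → R y) ∧ (y ∈ interior K → ∀ f ∈ frontier K, R f) from this.1 hy
  clear hy
  induction hxy with
  | refl => exact ⟨fun _ => .refl, fun h => absurd h hx⟩
  | @tail u v _ huv ih =>
    by_cases hdisj : Disjoint (segment ℝ u v) (interior K)
    · have hu : u ∉ interior K := disjoint_left.1 hdisj (left_mem_segment ℝ u v)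
      have hv : v ∉ interior K := disjoint_left.1 hdisj (right_mem_segment ℝ u v)
      exact ⟨fun _ => (ih.1 hu).tail ⟨huv.1, subset_sdiff.2 ⟨huv.2, hdisj⟩⟩, fun h => absurd h hv⟩
    · obtain ⟨w, hw, hwK⟩ := not_disjoint_iff.1 hdisj
      have hall : ∀ f ∈ frontier K, R f := by
        by_cases hu : u ∈ interior K
        · exact ih.2 hu
        · obtain ⟨e, he, hue⟩ := huv.exists_frontier_diff_interior hK hu hw (interior_subset hwK)
          exact fun f hf => ((ih.1 hu).tail hue).trans (hfr e he f hf)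
      refine ⟨fun hv => ?_, fun _ => hall⟩
      obtain ⟨e, he, hve⟩ := huv.symm.exists_frontier_diff_interior hK hv
        (segment_symm ℝ u v ▸ hw) (interior_subset hwK)
      exact (hall e he).tail hve.symm

end Detour

lemma pt2_coords (z : EucR 2) : pt2 (z 0) (z 1) = z := by
  ext i; fin_cases i <;> rfl

lemma neg_pt2 (a b : ℝ) : -pt2 a b = pt2 (-a) (-b) := by
  ext i; fin_cases i <;> rfl

lemma pt2_eq_add (a b : ℝ) : pt2 a b = a • pt2 1 0 + b • pt2 0 1 := by
  ext i; fin_cases i <;> simp [pt2]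

lemma smul_pt2_add_smul_pt2 (α β a b a' b' : ℝ) :
    α • pt2 a b + β • pt2 a' b' = pt2 (α * a + β * a') (α * b + β * b') := by
  ext i; fin_cases i <;> simp [pt2]

lemma dist_pt2 (a b a' b' : ℝ) :
    dist (pt2 a b) (pt2 a' b') = √((a - a') ^ 2 + (b - b') ^ 2) := by
  simp [EuclideanSpace.dist_eq, Fin.sum_univ_two, pt2, Real.dist_eq, sq_abs]

lemma isometry_pt2_left (b : ℝ) : Isometry (pt2 · b) :=
  Isometry.of_dist_eq fun a a' => by simp [dist_pt2, Real.sqrt_sq_eq_abs, Real.dist_eq]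

lemma isometry_pt2_right (a : ℝ) : Isometry (pt2 a ·) :=
  Isometry.of_dist_eq fun b b' => by simp [dist_pt2, Real.sqrt_sq_eq_abs, Real.dist_eq]

lemma dist_pt2_le (a b a' b' : ℝ) : dist (pt2 a b) (pt2 a' b') ≤ |a - a'| + |b - b'| := by
  calc dist (pt2 a b) (pt2 a' b') ≤ dist (pt2 a b) (pt2 a' b) + dist (pt2 a' b) (pt2 a' b') :=
        dist_triangle _ _ _
    _ = |a - a'| + |b - b'| := by
        rw [(isometry_pt2_left b).dist_eq, (isometry_pt2_right a').dist_eq, Real.dist_eq,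
          Real.dist_eq]

lemma segment_pt2_left (s₁ s₂ t : ℝ) :
    segment ℝ (pt2 s₁ t) (pt2 s₂ t) = (pt2 · t) '' uIcc s₁ s₂ := by
  have hL : ⇑(AffineMap.lineMap (k := ℝ) (pt2 0 t) (pt2 1 t)) = (pt2 · t) := by
    funext s; ext i; fin_cases i <;> simp [AffineMap.lineMap_apply, pt2]
  rw [← segment_eq_uIcc, ← hL, image_segment, hL]

lemma segment_pt2_right (s t₁ t₂ : ℝ) :
    segment ℝ (pt2 s t₁) (pt2 s t₂) = (pt2 s ·) '' uIcc t₁ t₂ := by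
  have hL : ⇑(AffineMap.lineMap (k := ℝ) (pt2 s 0) (pt2 s 1)) = (pt2 s ·) := by
    funext t; ext i; fin_cases i <;> simp [AffineMap.lineMap_apply, pt2]
  rw [← segment_eq_uIcc, ← hL, image_segment, hL]

lemma isOrthSegIn_pt2_left {S : Set (EucR 2)} {s₁ s₂ t : ℝ}
    (h : ∀ s ∈ uIcc s₁ s₂, pt2 s t ∈ S) :
    IsOrthSegIn S (pt2 s₁ t) (pt2 s₂ t) := by
  refine ⟨⟨0, fun j hj => ?_⟩, ?_⟩
  · fin_cases j
    · exact absurd rfl hj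
    · rfl
  · rw [segment_pt2_left]
    exact image_subset_iff.2 h

lemma isOrthSegIn_pt2_right {S : Set (EucR 2)} {s t₁ t₂ : ℝ}
    (h : ∀ t ∈ uIcc t₁ t₂, pt2 s t ∈ S) :
    IsOrthSegIn S (pt2 s t₁) (pt2 s t₂) := by
  refine ⟨⟨1, fun j hj => ?_⟩, ?_⟩
  · fin_cases j
    · rfl
    · exact absurd rfl hj
  · rw [segment_pt2_right]
    exact image_subset_iff.2 h

lemma Convex.exists_pt2_mem_of_mem_uIcc {K : Set (EucR 2)} (hK : Convex ℝ K)
    {s₁ s₂ t₁ t₂ s : ℝ} (h₁ : pt2 s₁ t₁ ∈ K) (h₂ : pt2 s₂ t₂ ∈ K) (hs : s ∈ uIcc s₁ s₂) :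
    ∃ t ∈ uIcc t₁ t₂, pt2 s t ∈ K := by
  rw [← segment_eq_uIcc] at hs
  obtain ⟨a, b, ha, hb, hab, rfl⟩ := hs
  refine ⟨a * t₁ + b * t₂, segment_eq_uIcc t₁ t₂ ▸ ⟨a, b, ha, hb, hab, rfl⟩, ?_⟩
  simpa [smul_pt2_add_smul_pt2] using hK h₁ h₂ ha hb hab

lemma reflTransGen_of_forall_sub_le {α : Type*} {r : α → α → Prop} (f : ℝ → α) {u v δ : ℝ}
    (hδ : 0 < δ) (huv : u ≤ v)
    (h : ∀ s t, u ≤ s → s ≤ t → t ≤ v → t - s ≤ δ → ReflTransGen r (f s) (f t)) :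
    ReflTransGen r (f u) (f v) := by
  obtain ⟨n, hn⟩ := exists_nat_ge ((v - u) / δ)
  suffices ∀ n : ℕ, ∀ t ∈ Icc u v, t - u ≤ n * δ → ReflTransGen r (f u) (f t) from
    this n v ⟨huv, le_rfl⟩ (by rwa [div_le_iff₀ hδ] at hn)
  intro n
  induction n with
  | zero =>
    intro t ht htu
    obtain rfl : t = u := le_antisymm (by simpa using htu) ht.1
    exact .refl
  | succ n ih =>
    intro t ht htu
    have hs : max u (t - δ) ∈ Icc u v := ⟨le_max_left _ _, max_le huv (by linarith [ht.2])⟩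
    have hsu : max u (t - δ) - u ≤ n * δ := by
      push_cast at htu
      have : max u (t - δ) ≤ u + n * δ := max_le (by simp; positivity) (by linarith)
      linarith
    exact (ih _ hs hsu).trans
      (h _ t hs.1 (max_le ht.1 (by linarith)) ht.2 (by linarith [le_max_right u (t - δ)]))

section Climb

variable {K : Set (EucR 2)} {g : ℝ → ℝ} {ε t₁ t₂ : ℝ}

lemma pt2_mem_cthickening_of_strip (hK : Convex ℝ K) (hε : 0 < ε) (hJ : t₂ - t₁ ≤ ε / 2)
    (hrail : ∀ t ∈ Icc t₁ t₂, pt2 (g t) t ∈ K) {s t t' : ℝ} (ht : t ∈ Icc t₁ t₂)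
    (ht' : t' ∈ Icc t₁ t₂) (hs : sInf (g '' Icc t₁ t₂) ≤ s) (hs' : s ≤ g t') :
    pt2 s t ∈ cthickening ε K := by
  obtain ⟨_, ⟨r, hr, rfl⟩, hgr⟩ := exists_lt_of_csInf_lt ⟨g t, mem_image_of_mem g ht⟩
    (lt_add_of_pos_right (sInf (g '' Icc t₁ t₂)) (half_pos hε))
  have hclose {q} (hq : q ∈ Icc t₁ t₂) : |t - q| ≤ ε / 2 :=
    abs_sub_le_iff.2 ⟨by linarith [ht.2, hq.1], by linarith [ht.1, hq.2]⟩
  rcases le_or_gt s (g r) with hsr | hrs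
  · -- `(s, t)` is close to the rail point `(g r, r)`, where `g` nearly attains its infimum
    refine mem_cthickening_of_dist_le _ _ _ _ (hrail r hr) ?_
    calc dist (pt2 s t) (pt2 (g r) r) ≤ |s - g r| + |t - r| := dist_pt2_le _ _ _ _
      _ ≤ ε / 2 + ε / 2 := add_le_add (abs_sub_le_iff.2 ⟨by linarith, by linarith⟩) (hclose hr)
      _ = ε := add_halves ε
  · -- the chord between the rail points at heights `r` and `t'` crosses the line `x = s`
    obtain ⟨q, hq, hqK⟩ := hK.exists_pt2_mem_of_mem_uIcc (hrail r hr) (hrail t' ht')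
      (mem_uIcc_of_le hrs.le hs')
    refine mem_cthickening_of_dist_le _ _ _ _ hqK ?_
    rw [(isometry_pt2_right s).dist_eq, Real.dist_eq]
    linarith [hclose (uIcc_subset_Icc hr ht' hq)]

lemma reflTransGen_strip (hK : Convex ℝ K) (hε : 0 < ε) (ht : t₁ ≤ t₂) (hJ : t₂ - t₁ ≤ ε / 2)
    (hrail : ∀ t ∈ Icc t₁ t₂, pt2 (g t) t ∈ K) (hg : BddBelow (g '' Icc t₁ t₂)) :
    ReflTransGen (IsOrthSegIn ({z | z 0 ≤ g (z 1)} ∩ cthickening ε K))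
      (pt2 (g t₁) t₁) (pt2 (g t₂) t₂) := by
  set m := sInf (g '' Icc t₁ t₂)
  have hm {t} (ht : t ∈ Icc t₁ t₂) : m ≤ g t := csInf_le hg (mem_image_of_mem g ht)
  have horiz {t} (ht : t ∈ Icc t₁ t₂) :
      IsOrthSegIn ({z | z 0 ≤ g (z 1)} ∩ cthickening ε K) (pt2 (g t) t) (pt2 m t) :=
    isOrthSegIn_pt2_left fun s hs => by
      rw [uIcc_of_ge (hm ht)] at hs
      exact ⟨hs.2, pt2_mem_cthickening_of_strip hK hε hJ hrail ht ht hs.1 hs.2⟩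
  have vert : IsOrthSegIn ({z | z 0 ≤ g (z 1)} ∩ cthickening ε K) (pt2 m t₁) (pt2 m t₂) :=
    isOrthSegIn_pt2_right fun t htt => by
      rw [uIcc_of_le ht] at htt
      exact ⟨hm htt, pt2_mem_cthickening_of_strip hK hε hJ hrail htt htt le_rfl (hm htt)⟩
  exact ((ReflTransGen.single (horiz (left_mem_Icc.2 ht))).tail vert).tail
    (horiz (right_mem_Icc.2 ht)).symm

lemma reflTransGen_climb (hK : Convex ℝ K) (hε : 0 < ε) {u v : ℝ} (huv : u ≤ v)
    (hrail : ∀ t ∈ Icc u v, pt2 (g t) t ∈ K) (hg : BddBelow (g '' Icc u v)) :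
    ReflTransGen (IsOrthSegIn ({z | z 0 ≤ g (z 1)} ∩ cthickening ε K))
      (pt2 (g u) u) (pt2 (g v) v) :=
  reflTransGen_of_forall_sub_le (fun t => pt2 (g t) t) (half_pos hε) huv
    fun s t hus hst htv hts =>
      have hsub : Icc s t ⊆ Icc u v := Icc_subset_Icc hus htv
      reflTransGen_strip hK hε hst hts (fun r hr => hrail r (hsub hr))
        (hg.mono (image_mono hsub))

end Climb

section OrderInterior

variable {α : Type*} [ConditionallyCompleteLinearOrder α] [TopologicalSpace α] [OrderTopology α]
  [DenselyOrdered α] [NoMinOrder α] [NoMaxOrder α] {s : Set α} {x : α}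

lemma csInf_lt_of_mem_interior (hs : BddBelow s) (hx : x ∈ interior s) : sInf s < x := by
  obtain ⟨l, u, hxlu, hsub⟩ := mem_nhds_iff_exists_Ioo_subset.1 (mem_interior_iff_mem_nhds.1 hx)
  obtain ⟨m, hlm, hmx⟩ := exists_between hxlu.1
  exact (csInf_le hs (hsub ⟨hlm, hmx.trans hxlu.2⟩)).trans_lt hmx

lemma lt_csSup_of_mem_interior (hs : BddAbove s) (hx : x ∈ interior s) : x < sSup s := by
  obtain ⟨l, u, hxlu, hsub⟩ := mem_nhds_iff_exists_Ioo_subset.1 (mem_interior_iff_mem_nhds.1 hx)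
  obtain ⟨m, hxm, hmu⟩ := exists_between hxlu.2
  exact hxm.trans_le (le_csSup hs (hsub ⟨hxlu.1.trans hxm, hmu⟩))

end OrderInterior

section ConvexBody

def hSlice (K : Set (EucR 2)) (y : ℝ) : Set ℝ := (pt2 · y) ⁻¹' K

noncomputable def leftEnd (K : Set (EucR 2)) (y : ℝ) : ℝ := sInf (hSlice K y)

noncomputable def rightEnd (K : Set (EucR 2)) (y : ℝ) : ℝ := sSup (hSlice K y)

def heights (K : Set (EucR 2)) : Set ℝ := (fun z : EucR 2 => z 1) '' K

noncomputable def minHeight (K : Set (EucR 2)) : ℝ := sInf (heights K)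

noncomputable def maxHeight (K : Set (EucR 2)) : ℝ := sSup (heights K)

variable {K : Set (EucR 2)} {x y : ℝ} {z : EucR 2}

lemma IsCompact.hSlice (hK : IsCompact K) (y : ℝ) : IsCompact (hSlice K y) :=
  (isometry_pt2_left y).isClosedEmbedding.isCompact_preimage hK

lemma IsCompact.heights (hK : IsCompact K) : IsCompact (heights K) :=
  hK.image (PiLp.continuous_apply 2 _ 1)

lemma leftEnd_mem (hK : IsCompact K) (h : (hSlice K y).Nonempty) : pt2 (leftEnd K y) y ∈ K :=
  (hK.hSlice y).sInf_mem h

lemma rightEnd_mem (hK : IsCompact K) (h : (hSlice K y).Nonempty) : pt2 (rightEnd K y) y ∈ K :=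
  (hK.hSlice y).sSup_mem h

lemma leftEnd_le (hK : IsCompact K) (h : pt2 x y ∈ K) : leftEnd K y ≤ x :=
  csInf_le (hK.hSlice y).bddBelow h

lemma le_rightEnd (hK : IsCompact K) (h : pt2 x y ∈ K) : x ≤ rightEnd K y :=
  le_csSup (hK.hSlice y).bddAbove h

lemma minHeight_le (hK : IsCompact K) (hz : z ∈ K) : minHeight K ≤ z 1 :=
  csInf_le hK.heights.bddBelow (mem_image_of_mem _ hz)

lemma le_maxHeight (hK : IsCompact K) (hz : z ∈ K) : z 1 ≤ maxHeight K :=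
  le_csSup hK.heights.bddAbove (mem_image_of_mem _ hz)

lemma hSlice_nonempty (hKv : Convex ℝ K) (hKc : IsCompact K) (hne : K.Nonempty)
    (h₁ : minHeight K ≤ y) (h₂ : y ≤ maxHeight K) : (hSlice K y).Nonempty := by
  have hpc : IsPreconnected (heights K) :=
    hKv.isPreconnected.image _ (PiLp.continuous_apply 2 _ 1).continuousOn
  obtain ⟨z, hz, rfl⟩ := hpc.Icc_subset (hKc.heights.sInf_mem (hne.image _))
    (hKc.heights.sSup_mem (hne.image _)) ⟨h₁, h₂⟩
  exact ⟨z 0, by simpa [hSlice, pt2_coords] using hz⟩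

lemma mem_interior_hSlice (hz : z ∈ interior K) : z 0 ∈ interior (hSlice K (z 1)) :=
  preimage_interior_subset_interior_preimage (isometry_pt2_left _).continuous
    (by simpa [pt2_coords] using hz)

lemma mem_interior_heights (hz : z ∈ interior K) : z 1 ∈ interior (heights K) :=
  interior_mono (fun t (ht : pt2 (z 0) t ∈ K) => (⟨pt2 (z 0) t, ht, rfl⟩ : t ∈ heights K))
    (preimage_interior_subset_interior_preimage (isometry_pt2_right _).continuous
      (by simpa [pt2_coords] using hz))

lemma leftEnd_lt_of_mem_interior (hK : IsCompact K) (hz : z ∈ interior K) :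
    leftEnd K (z 1) < z 0 :=
  csInf_lt_of_mem_interior (hK.hSlice _).bddBelow (mem_interior_hSlice hz)

lemma lt_rightEnd_of_mem_interior (hK : IsCompact K) (hz : z ∈ interior K) :
    z 0 < rightEnd K (z 1) :=
  lt_csSup_of_mem_interior (hK.hSlice _).bddAbove (mem_interior_hSlice hz)

lemma minHeight_lt_of_mem_interior (hK : IsCompact K) (hz : z ∈ interior K) :
    minHeight K < z 1 :=
  csInf_lt_of_mem_interior hK.heights.bddBelow (mem_interior_heights hz)

lemma lt_maxHeight_of_mem_interior (hK : IsCompact K) (hz : z ∈ interior K) :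
    z 1 < maxHeight K :=
  lt_csSup_of_mem_interior hK.heights.bddAbove (mem_interior_heights hz)

lemma pt2_mem_interior (hKv : Convex ℝ K) (hKc : IsCompact K) (hint : (interior K).Nonempty)
    (hy₁ : minHeight K < y) (hy₂ : y < maxHeight K) (hx₁ : leftEnd K y < x)
    (hx₂ : x < rightEnd K y) : pt2 x y ∈ interior K := by
  by_contra hxy
  obtain ⟨f, hf0, hf⟩ := geometric_hahn_banach_of_nonempty_interior_point hKv hxy hint
  set α := f (pt2 1 0)
  set β := f (pt2 0 1)
  have hf_pt2 (s t : ℝ) : f (pt2 s t) = s * α + t * β := by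
    rw [pt2_eq_add, map_add, map_smul, map_smul, smul_eq_mul, smul_eq_mul]
  have hne : K.Nonempty := hint.mono interior_subset
  have hsl := hSlice_nonempty hKv hKc hne hy₁.le hy₂.le
  have hα : α = 0 := by
    have h₁ := hf _ (leftEnd_mem hKc hsl)
    have h₂ := hf _ (rightEnd_mem hKc hsl)
    rw [hf_pt2, hf_pt2] at h₁ h₂
    nlinarith
  obtain ⟨zc, hzc, hc : zc 1 = minHeight K⟩ := hKc.heights.sInf_mem (hne.image _)
  obtain ⟨zd, hzd, hd : zd 1 = maxHeight K⟩ := hKc.heights.sSup_mem (hne.image _)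
  have hβ : β = 0 := by
    have h₁ := hf _ hzc
    have h₂ := hf _ hzd
    rw [← pt2_coords zc, hf_pt2, hf_pt2, hc, hα] at h₁
    rw [← pt2_coords zd, hf_pt2, hf_pt2, hd, hα] at h₂
    nlinarith
  exact hf0 (ContinuousLinearMap.ext fun z => by rw [← pt2_coords z, hf_pt2, hα, hβ]; simp)

end ConvexBody

section FrontierConnected

variable {K : Set (EucR 2)} {ε : ℝ}

lemma bddBelow_image_of_forall_pt2_mem (hK : IsBounded K) {g : ℝ → ℝ} {I : Set ℝ}
    (h : ∀ t ∈ I, pt2 (g t) t ∈ K) : BddBelow (g '' I) := by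
  refine ((EuclideanSpace.proj (0 : Fin 2) : EucR 2 →L[ℝ] ℝ).lipschitz.isBounded_image
    hK).bddBelow.mono ?_
  rintro _ ⟨t, ht, rfl⟩
  exact ⟨_, h t ht, rfl⟩

lemma eq_leftEnd_or_eq_rightEnd_or_eq_minHeight_or_eq_maxHeight (hKv : Convex ℝ K)
    (hKc : IsCompact K) (hint : (interior K).Nonempty) {e : EucR 2} (he : e ∈ frontier K) :
    e 0 = leftEnd K (e 1) ∨ e 0 = rightEnd K (e 1) ∨ e 1 = minHeight K ∨ e 1 = maxHeight K := by
  rw [hKc.isClosed.frontier_eq] at he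
  have he' : pt2 (e 0) (e 1) ∈ K := (pt2_coords e).symm ▸ he.1
  by_contra! hne
  refine he.2 (pt2_coords e ▸ pt2_mem_interior hKv hKc hint ?_ ?_ ?_ ?_)
  · exact (minHeight_le hKc he.1).lt_of_ne hne.2.2.1.symm
  · exact (le_maxHeight hKc he.1).lt_of_ne hne.2.2.2
  · exact (leftEnd_le hKc he').lt_of_ne hne.1.symm
  · exact (le_rightEnd hKc he').lt_of_ne hne.2.1

lemma reflTransGen_leftEnd (hKv : Convex ℝ K) (hKc : IsCompact K) (hne : K.Nonempty)
    (hε : 0 < ε) {u v : ℝ} (hu : minHeight K ≤ u) (huv : u ≤ v) (hv : v ≤ maxHeight K) :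
    ReflTransGen (IsOrthSegIn (cthickening ε K \ interior K))
      (pt2 (leftEnd K u) u) (pt2 (leftEnd K v) v) := by
  have hrail : ∀ t ∈ Icc u v, pt2 (leftEnd K t) t ∈ K := fun t ht =>
    leftEnd_mem hKc (hSlice_nonempty hKv hKc hne (hu.trans ht.1) (ht.2.trans hv))
  refine reflTransGen_isOrthSegIn_mono ?_
    (reflTransGen_climb hKv hε huv hrail (bddBelow_image_of_forall_pt2_mem hKc.isBounded hrail))
  rintro z ⟨hz, hzK⟩
  exact ⟨hzK, fun hint => (leftEnd_lt_of_mem_interior hKc hint).not_ge hz⟩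

lemma reflTransGen_rightEnd (hKv : Convex ℝ K) (hKc : IsCompact K) (hne : K.Nonempty)
    (hε : 0 < ε) {u v : ℝ} (hu : minHeight K ≤ u) (huv : u ≤ v) (hv : v ≤ maxHeight K) :
    ReflTransGen (IsOrthSegIn (cthickening ε K \ interior K))
      (pt2 (rightEnd K u) u) (pt2 (rightEnd K v) v) := by
  -- the right rail of `K` is the left rail of `-K`, traversed downwards
  set g : ℝ → ℝ := fun t => -rightEnd K (-t)
  have hrail : ∀ t ∈ Icc (-v) (-u), pt2 (g t) t ∈ -K := fun t ht => by
    rw [mem_neg, neg_pt2, neg_neg]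
    exact rightEnd_mem hKc (hSlice_nonempty hKv hKc hne (by linarith [ht.2]) (by linarith [ht.1]))
  have hclimb := reflTransGen_climb hKv.neg hε (neg_le_neg huv) hrail
    (bddBelow_image_of_forall_pt2_mem hKc.neg.isBounded hrail)
  have hband : {z | z 0 ≤ g (z 1)} ∩ cthickening ε (-K) ⊆ -(cthickening ε K \ interior K) := by
    rintro z ⟨hz, hzK⟩
    refine ⟨by rwa [← neg_cthickening, mem_neg] at hzK, fun hint => ?_⟩
    have hz : z 0 ≤ -rightEnd K (-z 1) := hz
    have := lt_rightEnd_of_mem_interior hKc hint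
    simp only [PiLp.neg_apply] at this
    linarith
  have := hclimb.lift (fun z => -z) fun a b h => by simpa using (h.mono hband).neg
  simp only [Function.onFun, g, neg_pt2, neg_neg] at this
  exact symm this

lemma isOrthSegIn_of_height_eq_minHeight_or_maxHeight (hKv : Convex ℝ K) (hKc : IsCompact K)
    {s₁ s₂ y : ℝ} (hy : y = minHeight K ∨ y = maxHeight K) (h₁ : pt2 s₁ y ∈ K)
    (h₂ : pt2 s₂ y ∈ K) : IsOrthSegIn (cthickening ε K \ interior K) (pt2 s₁ y) (pt2 s₂ y) :=
  isOrthSegIn_pt2_left fun s hs => by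
    obtain ⟨t, ht, hsK⟩ := hKv.exists_pt2_mem_of_mem_uIcc h₁ h₂ hs
    rw [uIcc_self, mem_singleton_iff] at ht
    subst ht
    refine ⟨self_subset_cthickening K hsK, fun hint => ?_⟩
    rcases hy with rfl | rfl
    · exact (minHeight_lt_of_mem_interior hKc hint).ne rfl
    · exact (lt_maxHeight_of_mem_interior hKc hint).ne rfl

lemma reflTransGen_top_left_of_mem_frontier (hKv : Convex ℝ K) (hKc : IsCompact K)
    (hint : (interior K).Nonempty) (hε : 0 < ε) {e : EucR 2} (he : e ∈ frontier K) :
    ReflTransGen (IsOrthSegIn (cthickening ε K \ interior K)) e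
      (pt2 (leftEnd K (maxHeight K)) (maxHeight K)) := by
  have heK : e ∈ K := frontier_subset_closure he |> hKc.isClosed.closure_subset
  have hne : K.Nonempty := ⟨e, heK⟩
  have hc := minHeight_le hKc heK
  have hd := le_maxHeight hKc heK
  have hleft {y} (hy₁ : minHeight K ≤ y) (hy₂ : y ≤ maxHeight K) : pt2 (leftEnd K y) y ∈ K :=
    leftEnd_mem hKc (hSlice_nonempty hKv hKc hne hy₁ hy₂)
  have htop : pt2 (leftEnd K (maxHeight K)) (maxHeight K) ∈ K := hleft (hc.trans hd) le_rfl
  rw [← pt2_coords e] at heK ⊢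
  rcases eq_leftEnd_or_eq_rightEnd_or_eq_minHeight_or_eq_maxHeight hKv hKc hint he with
    h | h | h | h
  · rw [h]
    exact reflTransGen_leftEnd hKv hKc hne hε hc hd le_rfl
  · rw [h]
    refine (reflTransGen_rightEnd hKv hKc hne hε hc hd le_rfl).tail ?_
    exact isOrthSegIn_of_height_eq_minHeight_or_maxHeight hKv hKc (.inr rfl)
      (rightEnd_mem hKc (hSlice_nonempty hKv hKc hne (hc.trans hd) le_rfl)) htop
  · rw [h] at heK ⊢
    refine .head ?_ (reflTransGen_leftEnd hKv hKc hne hε le_rfl (hc.trans hd) le_rfl)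
    exact isOrthSegIn_of_height_eq_minHeight_or_maxHeight hKv hKc (.inl rfl) heK
      (hleft le_rfl (hc.trans hd))
  · rw [h] at heK ⊢
    exact .single (isOrthSegIn_of_height_eq_minHeight_or_maxHeight hKv hKc (.inr rfl) heK htop)

lemma reflTransGen_of_mem_frontier (hKv : Convex ℝ K) (hKc : IsCompact K)
    (hint : (interior K).Nonempty) (hε : 0 < ε) {e f : EucR 2} (he : e ∈ frontier K)
    (hf : f ∈ frontier K) : ReflTransGen (IsOrthSegIn (cthickening ε K \ interior K)) e f :=
  (reflTransGen_top_left_of_mem_frontier hKv hKc hint hε he).trans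
    (symm (reflTransGen_top_left_of_mem_frontier hKv hKc hint hε hf))

end FrontierConnected

theorem orthConnected_diff_interior_convexBody_general (C K : Set (EucR 2))
    (hCo : OrthConnected C)
    (hK : IsConvexBody K) (hKC : K ⊆ interior C) :
    OrthConnected (C \ interior K) := by
  obtain ⟨hKv, hKc, hint⟩ := hK
  obtain ⟨ε, hε, hεC⟩ := hKc.exists_cthickening_subset_open isOpen_interior hKC
  have hN : cthickening ε K \ interior K ⊆ C \ interior K :=
    sdiff_subset_sdiff_left (hεC.trans interior_subset)
  rw [orthConnected_iff_reflTransGen] at hCo ⊢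
  intro x hx y hy
  refine reflTransGen_diff_interior hKc.isClosed (fun e he f hf => ?_) (hCo x hx.1 y hy.1)
    hx.2 hy.2
  exact reflTransGen_isOrthSegIn_mono hN (reflTransGen_of_mem_frontier hKv hKc hint hε he hf)

/-- If `C ⊆ ℝ²` is compact and orthogonally connected and `K ⊆ int C` is a convex
body, then `C \ int K` is orthogonally connected. -/
theorem orthConnected_diff_interior_convexBody (C K : Set (EucR 2))
    (hC : IsCompact C) (hCo : OrthConnected C)
    (hK : IsConvexBody K) (hKC : K ⊆ interior C) :
    OrthConnected (C \ interior K) :=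
  orthConnected_diff_interior_convexBody_general C K hCo hK hKC
end

section
/- There exists an infinite family 𝒦 of pairwise disjoint convex bodies in ℝ² such that the intersection ⋂_{K ∈ 𝒦} (complement of int K) contains a point from which no nondegenerate orthogonal path in this intersection can start; in particular this intersection is not orthogonally connected. -/
open Set MeasureTheory Bornology
open scoped ENNReal

/-! Put a closed disk of radius `‖c‖ / 8` around every point `c ≠ 0` of the coordinate axes
whose norm is a power of `1/2`. Two distinct centres either lie on one half-axis, with norms
differing by a factor at least `2`, or make a non-acute angle at the origin; either way
`‖c - c'‖ ≥ max ‖c‖ ‖c'‖ / 2`, so the disks are pairwise disjoint. They avoid the origin, but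
every axis-parallel segment leaving the origin, however short, runs through the centre of one
of them, so no orthogonal path can leave the origin in the complement of their interiors. -/

open Metric

theorem norm_le_norm_sub_of_inner_nonpos {E : Type*} [SeminormedAddCommGroup E]
    [InnerProductSpace ℝ E] {x y : E} (h : inner ℝ x y ≤ 0) : ‖x‖ ≤ ‖x - y‖ := by
  have : ‖x‖ ^ 2 ≤ ‖x - y‖ ^ 2 := by
    rw [norm_sub_sq_real]
    nlinarith [sq_nonneg ‖y‖]
  exact le_of_sq_le_sq this (norm_nonneg _)

theorem norm_sub_eq_abs_sub_norm_of_inner_eq {E : Type*} [SeminormedAddCommGroup E]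
    [InnerProductSpace ℝ E] {x y : E} (h : inner ℝ x y = ‖x‖ * ‖y‖) :
    ‖x - y‖ = |‖x‖ - ‖y‖| := by
  rw [← Real.sqrt_sq (norm_nonneg (x - y)), norm_sub_sq_real, h, ← Real.sqrt_sq_eq_abs]
  ring_nf

theorem half_pow_le_two_mul_abs_sub {q r : ℕ} (h : q ≠ r) :
    (1 / 2 : ℝ) ^ q ≤ 2 * |(1 / 2 : ℝ) ^ q - (1 / 2) ^ r| := by
  have hq : (0 : ℝ) < (1 / 2) ^ q := by positivity
  have hr : (0 : ℝ) < (1 / 2) ^ r := by positivity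
  rcases h.lt_or_gt with h | h
  · have : (1 / 2 : ℝ) ^ r ≤ (1 / 2) ^ q / 2 := by
      simpa [pow_succ, div_eq_mul_inv] using
        pow_le_pow_of_le_one (by norm_num : (0 : ℝ) ≤ 1 / 2) (by norm_num) h
    rw [abs_of_pos (by linarith)]
    linarith
  · have : (1 / 2 : ℝ) ^ q ≤ (1 / 2) ^ r / 2 := by
      simpa [pow_succ, div_eq_mul_inv] using
        pow_le_pow_of_le_one (by norm_num : (0 : ℝ) ≤ 1 / 2) (by norm_num) h
    rw [abs_of_neg (by linarith)]
    linarith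

theorem disjoint_closedBall_norm_div_eight {E : Type*} [NormedAddCommGroup E] {c c' : E}
    (hne : c ≠ c') (hc : ‖c‖ ≤ 2 * ‖c - c'‖) (hc' : ‖c'‖ ≤ 2 * ‖c - c'‖) :
    Disjoint (closedBall c (‖c‖ / 8)) (closedBall c' (‖c'‖ / 8)) := by
  apply closedBall_disjoint_closedBall
  rw [dist_eq_norm]
  linarith [norm_pos_iff.mpr (sub_ne_zero.mpr hne)]

theorem notMem_closedBall_norm_div_eight {E : Type*} [SeminormedAddCommGroup E] {c x : E}
    (h : ‖x‖ < 7 / 8 * ‖c‖ ∨ 9 / 8 * ‖c‖ < ‖x‖) : x ∉ closedBall c (‖c‖ / 8) := by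
  rw [mem_closedBall, dist_eq_norm, not_le]
  have := abs_norm_sub_norm_le x c
  rcases h with h | h
  · rw [abs_of_neg (by linarith [norm_nonneg x])] at this
    linarith
  · rw [abs_of_pos (by linarith [norm_nonneg c])] at this
    linarith

theorem mem_interior_closedBall_norm_div_eight {E : Type*} [NormedAddCommGroup E] {c : E}
    (hc : c ≠ 0) : c ∈ interior (closedBall c (‖c‖ / 8)) :=
  ball_subset_interior_closedBall (mem_ball_self (by positivity))

section OrthPath

variable {d : ℕ}

theorem IsOrthPathIn.eq_of_forall_isOrthSeg {S : Set (EucR d)} {p : EucR d}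
    (hp : ∀ z, IsOrthSeg p z → segment ℝ p z ⊆ S → z = p) {γ : ℕ → EucR d} {n : ℕ}
    (hγ : IsOrthPathIn S γ n) (hγ₀ : γ 0 = p) : ∀ k ≤ n, γ k = p := by
  intro k hk
  induction k with
  | zero => exact hγ₀
  | succ k ih =>
    have hγk := ih (by omega)
    obtain ⟨horth, hseg⟩ := hγ k (by omega)
    rw [hγk] at horth hseg
    exact hp _ horth hseg

theorem not_orthConnected_of_forall_isOrthSeg {S : Set (EucR d)} {p y : EucR d}
    (hp : ∀ z, IsOrthSeg p z → segment ℝ p z ⊆ S → z = p) (hpS : p ∈ S) (hyS : y ∈ S)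
    (hyp : y ≠ p) : ¬ OrthConnected S := by
  intro hS
  obtain ⟨n, γ, hγ₀, hγn, hγ⟩ := hS p hpS y hyS
  exact hyp (hγn ▸ hγ.eq_of_forall_isOrthSeg hp hγ₀ n le_rfl)

theorem IsOrthSeg.exists_eq_single {c : EucR d} (hc : IsOrthSeg 0 c) :
    ∃ i, c = EuclideanSpace.single i (c i) := by
  obtain ⟨i, hi⟩ := hc
  refine ⟨i, PiLp.ext fun j => ?_⟩
  by_cases hj : j = i
  · simp [hj]
  · simp [hj, ← hi j hj]

theorem IsOrthSeg.inner_nonpos_or_eq_norm_mul_norm {c c' : EucR d} (hc : IsOrthSeg 0 c)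
    (hc' : IsOrthSeg 0 c') : inner ℝ c c' ≤ 0 ∨ inner ℝ c c' = ‖c‖ * ‖c'‖ := by
  obtain ⟨i, hi⟩ := hc.exists_eq_single
  obtain ⟨j, hj⟩ := hc'.exists_eq_single
  rw [hi, hj, EuclideanSpace.inner_single_left, PiLp.norm_single, PiLp.norm_single]
  by_cases hij : i = j
  · subst hij
    simp only [PiLp.single_apply, if_true, conj_trivial, Real.norm_eq_abs, ← abs_mul]
    rcases le_total (c i * c' i) 0 with h | h
    · exact Or.inl h
    · exact Or.inr (abs_of_nonneg h).symm
  · simp [Ne.symm hij]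

end OrthPath

section DyadicAxisPoints

variable {d : ℕ}

def dyadicAxisPoints (d : ℕ) : Set (EucR d) :=
  {c | IsOrthSeg 0 c ∧ ∃ q : ℕ, ‖c‖ = (1 / 2) ^ q}

theorem norm_le_two_mul_norm_sub_of_mem_dyadicAxisPoints {c c' : EucR d}
    (hc : c ∈ dyadicAxisPoints d) (hc' : c' ∈ dyadicAxisPoints d) (hne : c ≠ c') :
    ‖c‖ ≤ 2 * ‖c - c'‖ := by
  obtain ⟨hc, q, hq⟩ := hc
  obtain ⟨hc', r, hr⟩ := hc'
  rcases hc.inner_nonpos_or_eq_norm_mul_norm hc' with h | h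
  · linarith [norm_le_norm_sub_of_inner_nonpos h, norm_nonneg c]
  · have hqr : q ≠ r := by
      rintro rfl
      apply hne
      rw [← sub_eq_zero, ← norm_eq_zero, norm_sub_eq_abs_sub_norm_of_inner_eq h, hq, hr, sub_self,
        abs_zero]
    rw [norm_sub_eq_abs_sub_norm_of_inner_eq h, hq, hr]
    exact half_pow_le_two_mul_abs_sub hqr

theorem norm_pos_of_mem_dyadicAxisPoints {c : EucR d} (hc : c ∈ dyadicAxisPoints d) :
    0 < ‖c‖ := by
  obtain ⟨-, q, hq⟩ := hc
  rw [hq]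
  positivity

theorem ne_zero_of_mem_dyadicAxisPoints {c : EucR d} (hc : c ∈ dyadicAxisPoints d) : c ≠ 0 :=
  norm_pos_iff.mp (norm_pos_of_mem_dyadicAxisPoints hc)

theorem disjoint_closedBall_of_mem_dyadicAxisPoints {c c' : EucR d}
    (hc : c ∈ dyadicAxisPoints d) (hc' : c' ∈ dyadicAxisPoints d) (hne : c ≠ c') :
    Disjoint (closedBall c (‖c‖ / 8)) (closedBall c' (‖c'‖ / 8)) := by
  refine disjoint_closedBall_norm_div_eight hne
    (norm_le_two_mul_norm_sub_of_mem_dyadicAxisPoints hc hc' hne) ?_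
  rw [norm_sub_rev]
  exact norm_le_two_mul_norm_sub_of_mem_dyadicAxisPoints hc' hc hne.symm

theorem norm_le_one_of_mem_dyadicAxisPoints {c : EucR d} (hc : c ∈ dyadicAxisPoints d) :
    ‖c‖ ≤ 1 := by
  obtain ⟨-, q, hq⟩ := hc
  rw [hq]
  exact pow_le_one₀ (by norm_num) (by norm_num)

theorem exists_mem_dyadicAxisPoints_mem_segment {z : EucR d} (hz : z ≠ 0)
    (h : IsOrthSeg 0 z) : ∃ c ∈ dyadicAxisPoints d, c ∈ segment ℝ 0 z := by
  have hz' : 0 < ‖z‖ := norm_pos_iff.mpr hz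
  obtain ⟨q, hq⟩ := exists_pow_lt_of_lt_one hz' (by norm_num : (1 / 2 : ℝ) < 1)
  set t := (1 / 2 : ℝ) ^ q / ‖z‖
  have ht₀ : 0 ≤ t := by positivity
  have ht₁ : t ≤ 1 := (div_le_one hz').mpr hq.le
  obtain ⟨i, hi⟩ := h
  refine ⟨t • z, ⟨⟨i, fun j hj => ?_⟩, q, ?_⟩, ⟨1 - t, t, by linarith, ht₀, by ring, by simp⟩⟩
  · simp [← hi j hj]
  · rw [norm_smul, Real.norm_of_nonneg ht₀, div_mul_cancel₀ _ hz'.ne']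

theorem countable_dyadicAxisPoints : (dyadicAxisPoints d).Countable := by
  refine (Set.countable_range fun p : Fin d × ℕ × Bool =>
    EuclideanSpace.single p.1 (if p.2.2 then (1 / 2 : ℝ) ^ p.2.1 else -(1 / 2) ^ p.2.1)).mono ?_
  rintro c ⟨hc, q, hq⟩
  obtain ⟨i, hi⟩ := hc.exists_eq_single
  rw [hi, PiLp.norm_single, Real.norm_eq_abs, abs_eq (by positivity)] at hq
  rcases hq with hq | hq
  · exact ⟨(i, q, true), by simp only [if_true, ← hq, ← hi]⟩
  · exact ⟨(i, q, false), by
      simp only [Bool.false_eq_true, if_false, ← neg_eq_iff_eq_neg.mpr hq, neg_neg, ← hi]⟩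

theorem infinite_dyadicAxisPoints [NeZero d] : (dyadicAxisPoints d).Infinite := by
  refine Set.infinite_of_injective_forall_mem (f := fun q : ℕ =>
    EuclideanSpace.single (0 : Fin d) ((1 / 2 : ℝ) ^ q)) ?_ fun q => ⟨?_, q, ?_⟩
  · intro q r h
    have := congrArg (· (0 : Fin d)) h
    simpa using this
  · exact ⟨0, fun j hj => by simp [hj]⟩
  · simp

def dyadicAxisDisksCompl (d : ℕ) : Set (EucR d) :=
  ⋂ c ∈ dyadicAxisPoints d, (interior (closedBall c (‖c‖ / 8)))ᶜ

theorem zero_mem_dyadicAxisDisksCompl : (0 : EucR d) ∈ dyadicAxisDisksCompl d := by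
  simp only [dyadicAxisDisksCompl, mem_iInter₂, mem_compl_iff]
  intro c hc hmem
  refine notMem_closedBall_norm_div_eight (Or.inl ?_) (interior_subset hmem)
  linarith [norm_zero (E := EucR d), norm_pos_of_mem_dyadicAxisPoints hc]

theorem mem_dyadicAxisDisksCompl_of_two_le_norm {x : EucR d} (hx : 2 ≤ ‖x‖) :
    x ∈ dyadicAxisDisksCompl d := by
  simp only [dyadicAxisDisksCompl, mem_iInter₂, mem_compl_iff]
  intro c hc hmem
  refine notMem_closedBall_norm_div_eight (Or.inr ?_) (interior_subset hmem)
  linarith [norm_le_one_of_mem_dyadicAxisPoints hc]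

theorem eq_zero_of_segment_subset_dyadicAxisDisksCompl {z : EucR d} (hz : IsOrthSeg 0 z)
    (hseg : segment ℝ 0 z ⊆ dyadicAxisDisksCompl d) : z = 0 := by
  by_contra hz₀
  obtain ⟨c, hc, hcz⟩ := exists_mem_dyadicAxisPoints_mem_segment hz₀ hz
  have hcS := hseg hcz
  simp only [dyadicAxisDisksCompl, mem_iInter₂, mem_compl_iff] at hcS
  exact hcS c hc (mem_interior_closedBall_norm_div_eight (ne_zero_of_mem_dyadicAxisPoints hc))

end DyadicAxisPoints

/-- There is an infinite family of pairwise disjoint convex bodies in `ℝ²` such that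
the intersection of the complements of their interiors contains a point from which
no nondegenerate orthogonal path in this intersection can start; in particular this
intersection is not orthogonally connected. -/
theorem exists_infinite_family_not_orthConnected :
    ∃ K : ℕ → Set (EucR 2),
      (∀ i, IsConvexBody (K i)) ∧ Pairwise (Function.onFun Disjoint K) ∧
      ∃ p ∈ ⋂ i, (interior (K i))ᶜ,
        (∀ n : ℕ, ∀ γ : ℕ → EucR 2,
            IsOrthPathIn (⋂ i, (interior (K i))ᶜ) γ n → γ 0 = p → ∀ k ≤ n, γ k = p) ∧
        ¬ OrthConnected (⋂ i, (interior (K i))ᶜ) := by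
  have := (countable_dyadicAxisPoints (d := 2)).to_subtype
  have := infinite_coe_iff.mpr (infinite_dyadicAxisPoints (d := 2))
  obtain ⟨_⟩ := nonempty_denumerable (dyadicAxisPoints 2)
  set e : ℕ ≃ dyadicAxisPoints 2 := (Denumerable.eqv _).symm
  set K : ℕ → Set (EucR 2) := fun n => closedBall (e n : EucR 2) (‖(e n : EucR 2)‖ / 8)
  have hS : ⋂ n, (interior (K n))ᶜ = dyadicAxisDisksCompl 2 := by
    rw [e.surjective.iInter_comp (fun c : dyadicAxisPoints 2 =>
      (interior (closedBall (c : EucR 2) (‖(c : EucR 2)‖ / 8)))ᶜ), dyadicAxisDisksCompl,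
      biInter_eq_iInter]
  have hstuck : ∀ z, IsOrthSeg 0 z → segment ℝ 0 z ⊆ ⋂ n, (interior (K n))ᶜ → z = 0 :=
    fun z hz hseg => eq_zero_of_segment_subset_dyadicAxisDisksCompl hz (hS ▸ hseg)
  have h₀ : (0 : EucR 2) ∈ ⋂ n, (interior (K n))ᶜ := hS ▸ zero_mem_dyadicAxisDisksCompl
  have h₂ : EuclideanSpace.single 0 2 ∈ ⋂ n, (interior (K n))ᶜ :=
    hS ▸ mem_dyadicAxisDisksCompl_of_two_le_norm (by simp)
  refine ⟨K, fun n => ⟨convex_closedBall _ _, isCompact_closedBall _ _, _,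
      mem_interior_closedBall_norm_div_eight (ne_zero_of_mem_dyadicAxisPoints (e n).2)⟩,
    fun m n hmn => disjoint_closedBall_of_mem_dyadicAxisPoints (e m).2 (e n).2
      (Subtype.coe_injective.ne (e.injective.ne hmn)),
    0, h₀, fun n γ hγ hγ₀ => hγ.eq_of_forall_isOrthSeg hstuck hγ₀,
    not_orthConnected_of_forall_isOrthSeg hstuck h₀ h₂ (by simp)⟩
end

section
/- If S ⊆ ℝ² is staircase connected, then the complement of S has no bounded connected component. -/
open Set MeasureTheory Bornology
open scoped ENNReal

/-! A staircase between two points that differ only in coordinate `i` never moves in any other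
coordinate `j`: its steps in direction `j` all have the same sign and sum to zero. Hence a staircase
connected set is orthogonally convex, i.e. meets every axis-parallel line in an interval. So through
a point `x ∉ S` one of the two axis-parallel rays misses `S`, and this unbounded connected ray lies in
the component of `Sᶜ` containing `x`. -/

theorem Finset.eq_zero_of_sum_eq_zero_of_mul_nonneg {ι R : Type*} [CommRing R] [LinearOrder R]
    [IsStrictOrderedRing R] {s : Finset ι} {f : ι → R} (hsum : ∑ i ∈ s, f i = 0)
    (hf : ∀ i ∈ s, ∀ j ∈ s, 0 ≤ f i * f j) {i : ι} (hi : i ∈ s) : f i = 0 := by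
  have : ∑ j ∈ s, f i * f j = 0 := by rw [← Finset.mul_sum, hsum, mul_zero]
  exact mul_self_eq_zero.1 ((Finset.sum_eq_zero_iff_of_nonneg (hf i hi)).1 this i hi)

theorem exists_lt_mem_uIcc_of_mem_uIcc {α : Type*} [LinearOrder α] (g : ℕ → α) {n : ℕ}
    (hn : 0 < n) {t : α} (ht : t ∈ uIcc (g 0) (g n)) : ∃ k < n, t ∈ uIcc (g k) (g (k + 1)) := by
  induction n, hn using Nat.le_induction with
  | base => exact ⟨0, one_pos, ht⟩
  | succ n _ ih =>
    rcases uIcc_subset_uIcc_union_uIcc ht with h | h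
    · obtain ⟨k, hk, hkt⟩ := ih h
      exact ⟨k, hk.trans n.lt_succ_self, hkt⟩
    · exact ⟨n, n.lt_succ_self, h⟩

section EuclideanSpace

variable {d : ℕ}

theorem image_apply_segment (x y : EucR d) (i : Fin d) :
    (fun z : EucR d => z i) '' segment ℝ x y = uIcc (x i) (y i) := by
  rw [← segment_eq_uIcc]
  exact image_segment ℝ (EuclideanSpace.proj i : EucR d →L[ℝ] ℝ).toLinearMap.toAffineMap x y

theorem apply_eq_of_mem_segment {x y z : EucR d} (hz : z ∈ segment ℝ x y) {j : Fin d}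
    (h : x j = y j) : z j = x j := by
  have := image_apply_segment x y j ▸ mem_image_of_mem (fun z : EucR d => z j) hz
  rwa [h, uIcc_self, mem_singleton_iff, ← h] at this

theorem IsOrthSeg.apply_eq_of_apply_ne {x y : EucR d} (h : IsOrthSeg x y) {i : Fin d}
    (hi : x i ≠ y i) : ∀ j ≠ i, x j = y j := by
  obtain ⟨i', hi'⟩ := h
  obtain rfl : i = i' := by
    by_contra hne
    exact hi (hi' i hne)
  exact hi'

theorem IsStaircaseIn.apply_eq_of_apply_eq {S : Set (EucR d)} {p : ℕ → EucR d} {n : ℕ}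
    (hp : IsStaircaseIn S p n) {i : Fin d} (hi : p 0 i = p n i) {k : ℕ} (hk : k ≤ n) :
    p k i = p 0 i := by
  have hstep : ∀ m < n, p (m + 1) i - p m i = 0 := fun m hm => by
    refine Finset.eq_zero_of_sum_eq_zero_of_mul_nonneg (s := Finset.range n)
      (f := fun m => p (m + 1) i - p m i) ?_ ?_ (Finset.mem_range.2 hm)
    · rw [Finset.sum_range_sub (fun m => p m i), hi, sub_self]
    · intro k hk l hl
      by_cases hk0 : p (k + 1) i - p k i = 0
      · simp [hk0]
      by_cases hl0 : p (l + 1) i - p l i = 0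
      · simp [hl0]
      rw [Finset.mem_range] at hk hl
      exact hp.2 k hk l hl i ((hp.1 k hk).1.apply_eq_of_apply_ne (sub_ne_zero.1 hk0).symm)
        ((hp.1 l hl).1.apply_eq_of_apply_ne (sub_ne_zero.1 hl0).symm)
  have := Finset.sum_range_sub (fun m => p m i) k
  rw [Finset.sum_eq_zero fun m hm => hstep m ((Finset.mem_range.1 hm).trans_le hk)] at this
  exact sub_eq_zero.1 this.symm

theorem StaircaseConnected.orthConvex {S : Set (EucR d)} (hS : StaircaseConnected S) :
    OrthConvex S := by
  rintro x hx y hy ⟨i, hxy⟩ w hw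
  obtain ⟨n, p, rfl, rfl, hp⟩ := hS x hx y hy
  rcases n.eq_zero_or_pos with rfl | hn
  · rw [segment_same, mem_singleton_iff] at hw
    exact hw ▸ hx
  obtain ⟨k, hk, hwk⟩ := exists_lt_mem_uIcc_of_mem_uIcc (fun m => p m i) hn
    (image_apply_segment (p 0) (p n) i ▸ mem_image_of_mem (fun z : EucR d => z i) hw)
  obtain ⟨z, hz, hzw⟩ := (image_apply_segment (p k) (p (k + 1)) i).symm ▸ hwk
  obtain rfl : z = w := by
    ext j
    by_cases hj : j = i
    · exact hj ▸ hzw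
    have hpk : p k j = p (k + 1) j := by
      rw [hp.apply_eq_of_apply_eq (hxy j hj) hk.le, hp.apply_eq_of_apply_eq (hxy j hj) hk]
    rw [apply_eq_of_mem_segment hz hpk, apply_eq_of_mem_segment hw (hxy j hj),
      hp.apply_eq_of_apply_eq (hxy j hj) hk.le]
  exact (hp.1 k hk).2 hz

noncomputable def axisLine (x : EucR d) (i : Fin d) : ℝ →ᵃ[ℝ] EucR d :=
  AffineMap.lineMap x (x + EuclideanSpace.single i 1)

@[simp]
theorem axisLine_zero (x : EucR d) (i : Fin d) : axisLine x i 0 = x :=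
  AffineMap.lineMap_apply_zero _ _

theorem isometry_axisLine (x : EucR d) (i : Fin d) : Isometry (axisLine x i) :=
  Isometry.of_dist_eq fun s t => by
    rw [axisLine, dist_lineMap_lineMap, dist_self_add_right, PiLp.norm_single, norm_one, mul_one]

theorem isOrthSeg_axisLine (x : EucR d) (i : Fin d) (s t : ℝ) :
    IsOrthSeg (axisLine x i s) (axisLine x i t) :=
  ⟨i, fun j hj => by simp [axisLine, AffineMap.lineMap_apply, hj]⟩

theorem OrthConvex.image_axisLine_Ici_subset_compl_or {S : Set (EucR d)} (hS : OrthConvex S) {x : EucR d}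
    (hx : x ∉ S) (i : Fin d) : axisLine x i '' Ici 0 ⊆ Sᶜ ∨ axisLine x i '' Iic 0 ⊆ Sᶜ := by
  rw [or_iff_not_and_not, not_subset, not_subset]
  rintro ⟨⟨_, ⟨t, ht, rfl⟩, htS⟩, ⟨_, ⟨s, hs, rfl⟩, hsS⟩⟩
  have h0 : (0 : ℝ) ∈ segment ℝ s t := by
    rw [segment_eq_Icc (le_trans hs ht)]
    exact ⟨hs, ht⟩
  have hx0 : x ∈ segment ℝ (axisLine x i s) (axisLine x i t) := by
    rw [← image_segment]
    simpa only [axisLine_zero] using mem_image_of_mem (axisLine x i) h0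
  exact hx (hS _ (not_not.1 hsS) _ (not_not.1 htS) (isOrthSeg_axisLine x i s t) hx0)

end EuclideanSpace

theorem Isometry.not_isBounded_connectedComponentIn {E F : Type*} [PseudoMetricSpace E]
    [PseudoMetricSpace F] {f : E → F} (hf : Isometry f) {I : Set E} (hI : IsPreconnected I)
    (hIb : ¬ IsBounded I) {a : E} (ha : a ∈ I) {U : Set F} (hU : f '' I ⊆ U) :
    ¬ IsBounded (connectedComponentIn U (f a)) := fun h =>
  hIb <| (hf.antilipschitz.isBounded_preimage <| h.subset <|
    (hI.image f hf.continuous.continuousOn).subset_connectedComponentIn (mem_image_of_mem f ha)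
      hU).subset (subset_preimage_image f I)

theorem OrthConvex.not_isBounded_connectedComponentIn_compl {d : ℕ} [NeZero d]
    {S : Set (EucR d)} (hS : OrthConvex S) {x : EucR d} (hx : x ∉ S) :
    ¬ IsBounded (connectedComponentIn Sᶜ x) := by
  rw [← axisLine_zero x 0]
  rcases hS.image_axisLine_Ici_subset_compl_or hx 0 with h | h
  · exact (isometry_axisLine x 0).not_isBounded_connectedComponentIn isPreconnected_Ici
      (fun hb => not_bddAbove_Ici 0 hb.bddAbove) self_mem_Ici h
  · exact (isometry_axisLine x 0).not_isBounded_connectedComponentIn isPreconnected_Iic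
      (fun hb => not_bddBelow_Iic 0 hb.bddBelow) self_mem_Iic h

/-- If `S ⊆ ℝ²` is staircase connected, then `Sᶜ` has no bounded connected
component. -/
theorem compl_no_bounded_component (S : Set (EucR 2)) (hS : StaircaseConnected S) :
    ∀ x ∈ Sᶜ, ¬ IsBounded (connectedComponentIn Sᶜ x) :=
  fun _ hx => hS.orthConvex.not_isBounded_connectedComponentIn_compl hx
end

section
/- For every convex body D ⊆ ℝ², there exists a rotation ρ of the plane such that ρ(D) is staircase connected. -/
open Set MeasureTheory Bornology
open scoped ENNReal

/-!
Rotate `D` so that a diameter `[p, q]` becomes horizontal. A diameter is a double normal, so `D`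
then lies in the vertical strip between `p` and `q`, and every vertical line meeting `D` meets
the chord `[p, q]`. Two points on opposite sides of the chord are joined through it by a
vertical–horizontal–vertical staircase. Two points on the same side are joined by a
horizontal–vertical–horizontal staircase whose vertical edge lies on the line `x = t`, where `t` is
the median of their abscissae and that of the highest (or lowest) point `m` of `D`: by convexity
this line meets `D` in a segment running from the chord past both points towards `m`.
-/

theorem apply_mem_uIcc_of_mem_segment {d : ℕ} {a b w : EucR d} (hw : w ∈ segment ℝ a b)
    (i : Fin d) : w i ∈ uIcc (a i) (b i) := by
  rw [← segment_eq_uIcc]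
  obtain ⟨s, t, hs, ht, hst, rfl⟩ := hw
  exact ⟨s, t, hs, ht, hst, rfl⟩

theorem exists_mem_segment_apply_eq {d : ℕ} (a b : EucR d) (i : Fin d) {t : ℝ}
    (ht : t ∈ uIcc (a i) (b i)) : ∃ w ∈ segment ℝ a b, w i = t := by
  rw [← segment_eq_uIcc] at ht
  obtain ⟨s, r, hs, hr, hsr, rfl⟩ := ht
  exact ⟨s • a + r • b, ⟨s, r, hs, hr, hsr, rfl⟩, rfl⟩

theorem exists_mem_uIcc_and_mem_uIcc_and_mem_uIcc (a b c : ℝ) :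
    ∃ t, t ∈ uIcc a b ∧ t ∈ uIcc a c ∧ t ∈ uIcc b c := by
  simp only [mem_uIcc]
  rcases le_total a b with hab | hab <;> rcases le_total b c with hbc | hbc <;>
    rcases le_total a c with hac | hac
  all_goals first
    | exact ⟨a, by grind⟩ | exact ⟨b, by grind⟩ | exact ⟨c, by grind⟩

theorem mem_uIcc_of_mem_uIcc_of_mem_uIcc {a c m s : ℝ} (ha : a ∈ uIcc c m)
    (hs : s ∈ uIcc a m) : a ∈ uIcc c s := by
  simp only [mem_uIcc] at *
  grind

theorem exists_staircase_of_three_edges {d : ℕ} {S : Set (EucR d)} (hS : Convex ℝ S)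
    {x a b y : EucR d} (hx : x ∈ S) (ha : a ∈ S) (hb : b ∈ S) (hy : y ∈ S)
    (hxa : IsOrthSeg x a) (hab : IsOrthSeg a b) (hby : IsOrthSeg b y)
    (hmono : ∀ i, (x i ≤ a i ∧ a i ≤ b i ∧ b i ≤ y i) ∨ (y i ≤ b i ∧ b i ≤ a i ∧ a i ≤ x i)) :
    ∃ n p, p 0 = x ∧ p n = y ∧ IsStaircaseIn S p n := by
  refine ⟨3, fun k => [x, a, b, y].getD k y, rfl, rfl, ?_, ?_⟩
  · intro k hk
    interval_cases k
    exacts [⟨hxa, hS.segment_subset hx ha⟩, ⟨hab, hS.segment_subset ha hb⟩,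
      ⟨hby, hS.segment_subset hb hy⟩]
  · intro k hk l hl i _ _
    rcases hmono i with ⟨h₁, h₂, h₃⟩ | ⟨h₁, h₂, h₃⟩ <;> interval_cases k <;> interval_cases l <;>
      simp only [List.getD_cons_succ, List.getD_cons_zero] <;> nlinarith

theorem dist_eq_abs_sub_apply_of_forall_ne {d : ℕ} {p q : EucR d} {i : Fin d}
    (hpq : ∀ j, j ≠ i → p j = q j) : dist p q = |p i - q i| := by
  rw [EuclideanSpace.dist_eq, Finset.sum_eq_single i (fun j _ hj => by simp [hpq j hj]) (by simp),
    Real.sqrt_sq_eq_abs, Real.dist_eq, abs_abs]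

theorem apply_mem_uIcc_of_forall_dist_le {d : ℕ} {K : Set (EucR d)} {p q : EucR d} {i : Fin d}
    (hpq : ∀ j, j ≠ i → p j = q j) (hp : p ∈ K) (hq : q ∈ K)
    (hdiam : ∀ a ∈ K, ∀ b ∈ K, dist a b ≤ dist p q) {w : EucR d} (hw : w ∈ K) :
    w i ∈ uIcc (p i) (q i) := by
  have hwp : |w i - p i| ≤ |p i - q i| := by
    rw [← Real.dist_eq, ← dist_eq_abs_sub_apply_of_forall_ne hpq]
    exact (PiLp.dist_apply_le w p i).trans (hdiam w hw p hp)
  have hwq : |w i - q i| ≤ |p i - q i| := by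
    rw [← Real.dist_eq, ← dist_eq_abs_sub_apply_of_forall_ne hpq]
    exact (PiLp.dist_apply_le w q i).trans (hdiam w hw q hq)
  obtain ⟨h₁, h₂⟩ := abs_le.1 hwp
  obtain ⟨h₃, h₄⟩ := abs_le.1 hwq
  rw [mem_uIcc]
  rcases abs_cases (p i - q i) with ⟨h, -⟩ | ⟨h, -⟩ <;> rw [h] at h₁ h₂ h₃ h₄
  · right; constructor <;> linarith
  · left; constructor <;> linarith

theorem IsCompact.exists_forall_dist_le {α : Type*} [PseudoMetricSpace α] {K : Set α}
    (hK : IsCompact K) (hne : K.Nonempty) :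
    ∃ p ∈ K, ∃ q ∈ K, ∀ a ∈ K, ∀ b ∈ K, dist a b ≤ dist p q := by
  obtain ⟨⟨p, q⟩, ⟨hp, hq⟩, hmax⟩ :=
    (hK.prod hK).exists_isMaxOn (hne.prod hne) continuous_dist.continuousOn
  exact ⟨p, hp, q, hq, fun a ha b hb => hmax (mk_mem_prod ha hb)⟩

theorem exists_rotation_apply_eq_norm_smul (v : EucR 2) :
    ∃ ρ : EucR 2 ≃ₗᵢ[ℝ] EucR 2,
      0 < LinearMap.det (ρ.toLinearEquiv : EucR 2 →ₗ[ℝ] EucR 2) ∧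
      ρ v = ‖v‖ • EuclideanSpace.single 0 1 := by
  have : Fact (Module.finrank ℝ (EucR 2) = 2) := ⟨by simp⟩
  let o : Orientation ℝ (EucR 2) (Fin 2) :=
    (EuclideanSpace.basisFun (Fin 2) ℝ).toBasis.orientation
  refine ⟨o.rotation (o.oangle v (‖v‖ • EuclideanSpace.single 0 1)), ?_, ?_⟩
  · rw [show ((o.rotation _).toLinearEquiv : EucR 2 →ₗ[ℝ] EucR 2) = (o.rotation _).toLinearMap
      from rfl, o.det_rotation]
    exact one_pos
  · rw [o.rotation_oangle_eq_iff_norm_eq]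
    simp [norm_smul]

@[simp]
theorem pt2_apply_zero (a b : ℝ) : pt2 a b 0 = a := rfl

@[simp]
theorem pt2_apply_one (a b : ℝ) : pt2 a b 1 = b := rfl

theorem pt2_eq_iff {a b : ℝ} {w : EucR 2} : pt2 a b = w ↔ a = w 0 ∧ b = w 1 := by
  constructor
  · rintro rfl
    exact ⟨rfl, rfl⟩
  · rintro ⟨rfl, rfl⟩
    ext i
    fin_cases i <;> rfl

theorem isOrthSeg_of_apply_one_eq {x y : EucR 2} (h : x 1 = y 1) : IsOrthSeg x y :=
  ⟨0, fun j hj => by fin_cases j <;> simp_all⟩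

theorem isOrthSeg_of_apply_zero_eq {x y : EucR 2} (h : x 0 = y 0) : IsOrthSeg x y :=
  ⟨1, fun j hj => by fin_cases j <;> simp_all⟩

theorem exists_staircase_hvh {S : Set (EucR 2)} (hS : Convex ℝ S) {x y : EucR 2} (hx : x ∈ S)
    (hy : y ∈ S) {t : ℝ} (ht : t ∈ uIcc (x 0) (y 0)) (hxt : pt2 t (x 1) ∈ S)
    (hyt : pt2 t (y 1) ∈ S) : ∃ n p, p 0 = x ∧ p n = y ∧ IsStaircaseIn S p n := by
  refine exists_staircase_of_three_edges hS hx hxt hyt hy (isOrthSeg_of_apply_one_eq rfl)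
    (isOrthSeg_of_apply_zero_eq rfl) (isOrthSeg_of_apply_one_eq rfl) fun i => ?_
  fin_cases i
  · simpa [and_comm, mem_uIcc] using ht
  · rcases le_total (x 1) (y 1) with h | h <;> simp [h]

theorem exists_staircase_vhv {S : Set (EucR 2)} (hS : Convex ℝ S) {x y : EucR 2} (hx : x ∈ S)
    (hy : y ∈ S) {s : ℝ} (hs : s ∈ uIcc (x 1) (y 1)) (hxs : pt2 (x 0) s ∈ S)
    (hys : pt2 (y 0) s ∈ S) : ∃ n p, p 0 = x ∧ p n = y ∧ IsStaircaseIn S p n := by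
  refine exists_staircase_of_three_edges hS hx hxs hys hy (isOrthSeg_of_apply_zero_eq rfl)
    (isOrthSeg_of_apply_one_eq rfl) (isOrthSeg_of_apply_zero_eq rfl) fun i => ?_
  fin_cases i
  · rcases le_total (x 0) (y 0) with h | h <;> simp [h]
  · simpa [and_comm, mem_uIcc] using hs

theorem exists_pt2_mem_of_mem_uIcc {S : Set (EucR 2)} (hS : Convex ℝ S) {a b : EucR 2}
    (ha : a ∈ S) (hb : b ∈ S) {t : ℝ} (ht : t ∈ uIcc (a 0) (b 0)) :
    ∃ s ∈ uIcc (a 1) (b 1), pt2 t s ∈ S := by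
  obtain ⟨w, hw, rfl⟩ := exists_mem_segment_apply_eq a b 0 ht
  refine ⟨w 1, apply_mem_uIcc_of_mem_segment hw 1, ?_⟩
  rw [pt2_eq_iff.2 ⟨rfl, rfl⟩]
  exact hS.segment_subset ha hb hw

theorem pt2_mem_of_mem_uIcc {S : Set (EucR 2)} (hS : Convex ℝ S) {t s₁ s₂ s : ℝ}
    (h₁ : pt2 t s₁ ∈ S) (h₂ : pt2 t s₂ ∈ S) (hs : s ∈ uIcc s₁ s₂) : pt2 t s ∈ S := by
  obtain ⟨w, hw, hws⟩ := exists_mem_segment_apply_eq (pt2 t s₁) (pt2 t s₂) 1 hs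
  have hwt : w 0 = t := by simpa using apply_mem_uIcc_of_mem_segment hw 0
  rw [pt2_eq_iff.2 ⟨hwt.symm, hws.symm⟩]
  exact hS.segment_subset h₁ h₂ hw

theorem exists_staircase_of_apply_one_mem_uIcc {K : Set (EucR 2)} (hK : Convex ℝ K)
    {x y m : EucR 2} (hx : x ∈ K) (hy : y ∈ K) (hm : m ∈ K) {c : ℝ}
    (hfoot : ∀ t ∈ uIcc (x 0) (y 0), pt2 t c ∈ K) (hxm : x 1 ∈ uIcc c (m 1))
    (hym : y 1 ∈ uIcc c (m 1)) : ∃ n p, p 0 = x ∧ p n = y ∧ IsStaircaseIn K p n := by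
  obtain ⟨t, hxy, hxm', hym'⟩ := exists_mem_uIcc_and_mem_uIcc_and_mem_uIcc (x 0) (y 0) (m 0)
  obtain ⟨sx, hsx, hsxK⟩ := exists_pt2_mem_of_mem_uIcc hK hx hm hxm'
  obtain ⟨sy, hsy, hsyK⟩ := exists_pt2_mem_of_mem_uIcc hK hy hm hym'
  exact exists_staircase_hvh hK hx hy hxy
    (pt2_mem_of_mem_uIcc hK (hfoot t hxy) hsxK (mem_uIcc_of_mem_uIcc_of_mem_uIcc hxm hsx))
    (pt2_mem_of_mem_uIcc hK (hfoot t hxy) hsyK (mem_uIcc_of_mem_uIcc_of_mem_uIcc hym hsy))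

theorem staircaseConnected_of_spanning_horizontal_chord {K : Set (EucR 2)} (hK : Convex ℝ K)
    (hKc : IsCompact K) {p q : EucR 2} (hp : p ∈ K) (hq : q ∈ K) (hpq : p 1 = q 1)
    (hspan : ∀ w ∈ K, w 0 ∈ uIcc (p 0) (q 0)) : StaircaseConnected K := by
  have hchord : ∀ t ∈ uIcc (p 0) (q 0), pt2 t (p 1) ∈ K := fun t ht => by
    obtain ⟨s, hs, hsK⟩ := exists_pt2_mem_of_mem_uIcc hK hp hq ht
    rwa [← hpq, uIcc_self, mem_singleton_iff.1 hs] at *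
  intro x hx y hy
  have hfoot : ∀ t ∈ uIcc (x 0) (y 0), pt2 t (p 1) ∈ K := fun t ht =>
    hchord t (uIcc_subset_uIcc (hspan x hx) (hspan y hy) ht)
  by_cases hc : p 1 ∈ uIcc (x 1) (y 1)
  · exact exists_staircase_vhv hK hx hy hc (hfoot _ left_mem_uIcc) (hfoot _ right_mem_uIcc)
  obtain ⟨m, hm, hxm, hym⟩ : ∃ m ∈ K, x 1 ∈ uIcc (p 1) (m 1) ∧ y 1 ∈ uIcc (p 1) (m 1) := by
    have hcont : ContinuousOn (fun w : EucR 2 => w 1) K := by fun_prop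
    simp only [mem_uIcc, not_or, not_and_or, not_le] at hc ⊢
    rcases le_or_gt (x 1) (p 1) with h | h
    · obtain ⟨m, hm, hmin⟩ := hKc.exists_isMinOn ⟨x, hx⟩ hcont
      exact ⟨m, hm, .inr ⟨hmin hx, h⟩, .inr ⟨hmin hy, by grind⟩⟩
    · obtain ⟨m, hm, hmax⟩ := hKc.exists_isMaxOn ⟨x, hx⟩ hcont
      exact ⟨m, hm, .inl ⟨h.le, hmax hx⟩, .inl ⟨by grind, hmax hy⟩⟩
  exact exists_staircase_of_apply_one_mem_uIcc hK hx hy hm hfoot hxm hym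

theorem staircaseConnected_of_horizontal_diameter {K : Set (EucR 2)} (hK : Convex ℝ K)
    (hKc : IsCompact K) {p q : EucR 2} (hp : p ∈ K) (hq : q ∈ K) (hpq : p 1 = q 1)
    (hdiam : ∀ a ∈ K, ∀ b ∈ K, dist a b ≤ dist p q) : StaircaseConnected K :=
  staircaseConnected_of_spanning_horizontal_chord hK hKc hp hq hpq fun _ hw =>
    apply_mem_uIcc_of_forall_dist_le (fun j hj => by fin_cases j <;> simp_all) hp hq hdiam hw

/-- Every convex body in `ℝ²` can be rotated to become staircase connected. -/
theorem exists_rotation_staircaseConnected (D : Set (EucR 2)) (hD : IsConvexBody D) :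
    ∃ ρ : EucR 2 ≃ₗᵢ[ℝ] EucR 2,
      0 < LinearMap.det (ρ.toLinearEquiv : EucR 2 →ₗ[ℝ] EucR 2) ∧
      StaircaseConnected (⇑ρ '' D) := by
  obtain ⟨hconv, hcomp, hint⟩ := hD
  obtain ⟨p, hp, q, hq, hdiam⟩ := hcomp.exists_forall_dist_le (hint.mono interior_subset)
  obtain ⟨ρ, hdet, hρ⟩ := exists_rotation_apply_eq_norm_smul (q - p)
  have hpq : ρ p 1 = ρ q 1 := by
    have := congrArg (· 1) hρ
    simp only [map_sub, PiLp.sub_apply, PiLp.smul_apply, smul_eq_mul, ne_eq, one_ne_zero,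
      not_false_eq_true, PiLp.single_eq_of_ne, mul_zero] at this
    linarith
  refine ⟨ρ, hdet, staircaseConnected_of_horizontal_diameter
    (hconv.linear_image ρ.toLinearEquiv.toLinearMap) (hcomp.image ρ.continuous)
    (mem_image_of_mem ρ hp) (mem_image_of_mem ρ hq) hpq ?_⟩
  rintro _ ⟨a, ha, rfl⟩ _ ⟨b, hb, rfl⟩
  simpa only [LinearIsometryEquiv.dist_map] using hdiam a ha b hb
end
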